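/- arXiv:2507.04536 — 5 statements merged into one kernel-verified Lean document; each statement's English description precedes it below -/
import Mathlib

section
/- Let μ be a non-zero Radon measure on ℝⁿ whose support Γ = supp μ is compact, and let d : Γ → [0,∞) be a function such that 𝔻̄^{d(x)} μ(x) < ∞ for every x ∈ Γ. Then there exist finitely many points x₁,…,x_N ∈ Γ and constants c̲ > 0 and r̲ ∈ (0,1] such that, setting d̲ := min_{1≤i≤N} d(x_i), one has μ(B(y,ϱ)) ≤ c̲ ϱ^{d̲} for all y ∈ Γ and all 0 < ϱ ≤ r̲ (i.e. μ is upper d̲-regular). -/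
/-!
Finiteness of the locally uniform upper density at `x` gives a radius `r x` and a constant
`C x` with `μ(B(y,ϱ)) ≤ C x ϱ^{d x}` for all `y ∈ B(x, r x)` and `ϱ ≤ r x`. Finitely many of
these balls cover the compact support; on scales `ϱ ≤ 1` the smallest exponent gives the
weakest bound `ϱ^{d x} ≤ ϱ^{d̲}`, so the smallest radius and the sum of the constants work
uniformly.
-/

open MeasureTheory Metric Filter Topology ENNReal

/-- The topological support of a Borel measure on `ℝⁿ`. -/
def msupport {n : ℕ} (μ : Measure (EuclideanSpace ℝ (Fin n))) :
    Set (EuclideanSpace ℝ (Fin n)) :=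
  {x | ∀ r : ℝ, 0 < r → 0 < μ (ball x r)}

/-- The locally uniform upper `d`-density of `μ` at `x`. -/
noncomputable def unifUpperDensity {n : ℕ} (μ : Measure (EuclideanSpace ℝ (Fin n))) (d : ℝ)
    (x : EuclideanSpace ℝ (Fin n)) : ℝ≥0∞ :=
  ⨅ (r : ℝ) (_ : 0 < r),
    ⨆ (y : EuclideanSpace ℝ (Fin n)) (_ : y ∈ ball x r) (ϱ : ℝ) (_ : 0 < ϱ) (_ : ϱ ≤ r),
      μ (ball y ϱ) / ENNReal.ofReal (ϱ ^ d)

open scoped NNReal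

lemma msupport_eq_support {n : ℕ} (μ : Measure (EuclideanSpace ℝ (Fin n))) :
    msupport μ = μ.support :=
  Set.ext fun _ => nhds_basis_ball.mem_measureSupport.symm

lemma msupport_nonempty {n : ℕ} {μ : Measure (EuclideanSpace ℝ (Fin n))} (hμ : μ ≠ 0) :
    (msupport μ).Nonempty :=
  msupport_eq_support μ ▸ Measure.nonempty_support hμ

lemma exists_measure_ball_le_of_unifUpperDensity_ne_top {n : ℕ}
    {μ : Measure (EuclideanSpace ℝ (Fin n))} {s : ℝ} {x : EuclideanSpace ℝ (Fin n)}
    (h : unifUpperDensity μ s x ≠ ⊤) :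
    ∃ r > 0, ∃ C : ℝ≥0, ∀ y ∈ ball x r, ∀ ϱ : ℝ, 0 < ϱ → ϱ ≤ r →
      μ (ball y ϱ) ≤ C * ENNReal.ofReal (ϱ ^ s) := by
  obtain ⟨r, hr⟩ := iInf_lt_iff.mp h.lt_top
  obtain ⟨hr_pos, hS⟩ := iInf_lt_iff.mp hr
  obtain ⟨C, hC, -⟩ := ENNReal.lt_iff_exists_coe.mp hS
  refine ⟨r, hr_pos, C, fun y hy ϱ hϱ hϱr => ?_⟩
  rw [← ENNReal.div_le_iff _ ENNReal.ofReal_ne_top, ← hC]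
  · exact le_iSup₂_of_le y hy <| le_iSup₂_of_le ϱ hϱ <| le_iSup_of_le hϱr le_rfl
  · exact (ENNReal.ofReal_pos.mpr (Real.rpow_pos_of_pos hϱ s)).ne'

lemma IsCompact.exists_fin_cover {X : Type*} [TopologicalSpace X] {K : Set X}
    (hK : IsCompact K) (hne : K.Nonempty) (U : X → Set X) (hU : ∀ x ∈ K, U x ∈ 𝓝 x) :
    ∃ N, 0 < N ∧ ∃ x : Fin N → X, (∀ i, x i ∈ K) ∧ K ⊆ ⋃ i, U (x i) := by
  obtain ⟨t, htK, hcov⟩ := hK.elim_nhds_subcover U hU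
  have hcov' : K ⊆ ⋃ i, U (t.equivFin.symm i) := fun y hy => by
    obtain ⟨x, hx, hyx⟩ := Set.mem_iUnion₂.mp (hcov hy)
    exact Set.mem_iUnion.mpr ⟨t.equivFin ⟨x, hx⟩, by simpa using hyx⟩
  obtain ⟨y, hy⟩ := hne
  obtain ⟨i, -⟩ := Set.mem_iUnion.mp (hcov' hy)
  exact ⟨t.card, i.pos, _, fun i => htK _ (t.equivFin.symm i).2, hcov'⟩

lemma exists_measure_ball_le_of_finite_cover {X ι : Type*} [PseudoMetricSpace X]
    [MeasurableSpace X] [Fintype ι] [Nonempty ι] {μ : Measure X} {K : Set X}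
    {U : ι → Set X} {r : ι → ℝ} {C : ι → ℝ≥0} {s : ι → ℝ}
    (hK : K ⊆ ⋃ i, U i) (hr : ∀ i, 0 < r i)
    (hloc : ∀ i, ∀ y ∈ U i, ∀ ϱ : ℝ, 0 < ϱ → ϱ ≤ r i →
      μ (ball y ϱ) ≤ C i * ENNReal.ofReal (ϱ ^ s i)) :
    ∃ c > (0 : ℝ), ∃ R : ℝ, 0 < R ∧ R ≤ 1 ∧ ∀ y ∈ K, ∀ ϱ : ℝ, 0 < ϱ → ϱ ≤ R →
      μ (ball y ϱ) ≤ ENNReal.ofReal (c * ϱ ^ (⨅ i, s i)) := by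
  obtain ⟨i₀, hi₀⟩ := exists_eq_ciInf_of_finite (f := r)
  set c : ℝ≥0 := ∑ i, C i + 1
  refine ⟨c, by positivity, min 1 (⨅ i, r i), lt_min one_pos (hi₀ ▸ hr i₀),
    min_le_left _ _, fun y hy ϱ hϱ hϱR => ?_⟩
  obtain ⟨i, hyi⟩ := Set.mem_iUnion.mp (hK hy)
  have hϱr : ϱ ≤ r i :=
    hϱR.trans <| (min_le_right _ _).trans <| ciInf_le (Set.finite_range r).bddBelow i
  have hCc : C i ≤ c :=
    (Finset.single_le_sum (f := C) (fun _ _ => zero_le) (Finset.mem_univ i)).trans le_self_add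
  have hpow : ϱ ^ s i ≤ ϱ ^ (⨅ j, s j) :=
    Real.rpow_le_rpow_of_exponent_ge hϱ (hϱR.trans (min_le_left _ _))
      (ciInf_le (Set.finite_range s).bddBelow i)
  calc μ (ball y ϱ) ≤ C i * ENNReal.ofReal (ϱ ^ s i) := hloc i y hyi ϱ hϱ hϱr
    _ ≤ c * ENNReal.ofReal (ϱ ^ (⨅ j, s j)) := by gcongr
    _ = ENNReal.ofReal (c * ϱ ^ (⨅ j, s j)) := by
      rw [ENNReal.ofReal_mul c.coe_nonneg, ENNReal.ofReal_coe_nnreal]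

theorem stmt2_general {n : ℕ} (μ : Measure (EuclideanSpace ℝ (Fin n)))
    (hμ : μ ≠ 0) (hcomp : IsCompact (msupport μ))
    (d : EuclideanSpace ℝ (Fin n) → ℝ)
    (hfin : ∀ x ∈ msupport μ, unifUpperDensity μ (d x) x ≠ ⊤) :
    ∃ (N : ℕ), 0 < N ∧ ∃ pts : Fin N → EuclideanSpace ℝ (Fin n),
      (∀ i, pts i ∈ msupport μ) ∧
      ∃ c > (0 : ℝ), ∃ r : ℝ, 0 < r ∧ r ≤ 1 ∧
        ∀ y ∈ msupport μ, ∀ ϱ : ℝ, 0 < ϱ → ϱ ≤ r →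
          μ (ball y ϱ) ≤ ENNReal.ofReal (c * ϱ ^ (⨅ i, d (pts i))) := by
  choose! r hr C hC using fun x hx => exists_measure_ball_le_of_unifUpperDensity_ne_top (hfin x hx)
  obtain ⟨N, hN, pts, hpts, hcov⟩ := hcomp.exists_fin_cover (msupport_nonempty hμ)
    (fun x => ball x (r x)) fun x hx => ball_mem_nhds x (hr x hx)
  have : Nonempty (Fin N) := ⟨⟨0, hN⟩⟩
  exact ⟨N, hN, pts, hpts,
    exists_measure_ball_le_of_finite_cover hcov (fun i => hr _ (hpts i)) fun i => hC _ (hpts i)⟩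

/-- if `μ` is a non-zero Radon measure with compact support `Γ` and
`d : Γ → [0,∞)` has everywhere finite locally uniform upper `d(x)`-density, then there are
finitely many points `x₁,…,x_N ∈ Γ` and constants `c̲ > 0`, `r̲ ∈ (0,1]` such that, with
`d̲ := min_i d(x_i)`, `μ(B(y,ϱ)) ≤ c̲ ϱ^d̲` for all `y ∈ Γ` and `0 < ϱ ≤ r̲`. -/
theorem stmt2 {n : ℕ} (μ : Measure (EuclideanSpace ℝ (Fin n))) [IsFiniteMeasureOnCompacts μ]
    (hμ : μ ≠ 0) (hcomp : IsCompact (msupport μ))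
    (d : EuclideanSpace ℝ (Fin n) → ℝ) (hd0 : ∀ x ∈ msupport μ, 0 ≤ d x)
    (hfin : ∀ x ∈ msupport μ, unifUpperDensity μ (d x) x ≠ ⊤) :
    ∃ (N : ℕ), 0 < N ∧ ∃ pts : Fin N → EuclideanSpace ℝ (Fin n),
      (∀ i, pts i ∈ msupport μ) ∧
      ∃ c > (0 : ℝ), ∃ r : ℝ, 0 < r ∧ r ≤ 1 ∧
        ∀ y ∈ msupport μ, ∀ ϱ : ℝ, 0 < ϱ → ϱ ≤ r →
          μ (ball y ϱ) ≤ ENNReal.ofReal (c * ϱ ^ (⨅ i, d (pts i))) :=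
  stmt2_general μ hμ hcomp d hfin
end

section
/- Let μ be a Radon measure on ℝⁿ, let A ⊆ ℝⁿ, and let d : A → [0,∞) be a function such that D̄^{d(x)} μ(x) > 0 for every x ∈ A. Then ℋ^s(A) = 0 for every real s > sup_{x∈A} d(x); in particular dim_H A ≤ sup_{x∈A} d(x). -/
open MeasureTheory Metric Filter Topology ENNReal

/-- The upper `d`-density of a measure `μ` at `x`: `limsup_{r → 0⁺} μ(B(x,r)) / r^d`. -/
noncomputable def upperDensity {n : ℕ} (μ : Measure (EuclideanSpace ℝ (Fin n))) (d : ℝ)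
    (x : EuclideanSpace ℝ (Fin n)) : ℝ≥0∞ :=
  Filter.limsup (fun r : ℝ => μ (ball x r) / ENNReal.ofReal (r ^ d)) (𝓝[>] (0 : ℝ))

/-!
If `d x < s` and the upper `d x`-density of `μ` at `x` is positive, then the upper `s`-density
at `x` is infinite: for every `T` there are arbitrarily small radii with `T r^s ≤ μ(B(x, r))`.
By the Vitali covering lemma, disjoint such balls can be chosen whose fourfold enlargements
cover `A`, so locally `ℋ^s(A) ≤ 8^s μ(U) / T` for a bounded neighbourhood `U` of `A`.
Letting `T → ∞` gives `ℋ^s(A) = 0`.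
-/

theorem frequently_ofReal_mul_rpow_le_measure_ball {n : ℕ}
    {μ : Measure (EuclideanSpace ℝ (Fin n))} {x : EuclideanSpace ℝ (Fin n)} {d s : ℝ}
    (hpos : 0 < upperDensity μ d x) (hds : d < s) (T : ℝ) :
    ∃ᶠ r in 𝓝[>] (0 : ℝ), ENNReal.ofReal (T * r ^ s) ≤ μ (ball x r) := by
  obtain ⟨c, hc0, hc⟩ := exists_between hpos
  have hc_top : c ≠ ∞ := hc.ne_top
  have hfreq : ∃ᶠ r in 𝓝[>] (0 : ℝ), c * ENNReal.ofReal (r ^ d) < μ (ball x r) :=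
    (frequently_lt_of_lt_limsup (by isBoundedDefault) hc).mp <|
      eventually_mem_nhdsWithin.mono fun r (hr : 0 < r) h =>
        (ENNReal.lt_div_iff_mul_lt (Or.inl (ofReal_pos.2 (Real.rpow_pos_of_pos hr d)).ne')
          (Or.inl ofReal_ne_top)).1 h
  have hsmall : ∀ᶠ r in 𝓝[>] (0 : ℝ), T * r ^ (s - d) ≤ c.toReal := by
    have hlim : Tendsto (fun r : ℝ => T * r ^ (s - d)) (𝓝[>] 0) (𝓝 0) := by
      have h := (Real.continuousAt_rpow_const 0 (s - d) (Or.inr (sub_pos.2 hds).le)).tendsto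
      rw [Real.zero_rpow (sub_pos.2 hds).ne'] at h
      simpa using (h.const_mul T).mono_left nhdsWithin_le_nhds
    exact hlim.eventually_le_const (toReal_pos hc0.ne' hc_top)
  refine (hfreq.and_eventually (hsmall.and self_mem_nhdsWithin)).mono
    fun r ⟨hμ, hr, (hr0 : 0 < r)⟩ => ?_
  calc ENNReal.ofReal (T * r ^ s) = ENNReal.ofReal (T * r ^ (s - d) * r ^ d) := by
        rw [mul_assoc, ← Real.rpow_add hr0, sub_add_cancel]
    _ ≤ ENNReal.ofReal (c.toReal * r ^ d) := by gcongr
    _ = c * ENNReal.ofReal (r ^ d) := by rw [ofReal_mul toReal_nonneg, ofReal_toReal hc_top]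
    _ ≤ μ (ball x r) := hμ.le

section MetricSpace

variable {X : Type*} [MetricSpace X]

theorem ediam_closedBall_le_ofReal (x : X) (r : ℝ) :
    ediam (closedBall x r) ≤ ENNReal.ofReal (2 * r) :=
  ediam_le_of_forall_dist_le fun a ha b hb =>
    (dist_triangle_right a b x).trans ((add_le_add ha hb).trans_eq (two_mul r).symm)

theorem exists_countable_pairwiseDisjoint_closedBall_cover [TopologicalSpace.SeparableSpace X]
    {A : Set X} {P : X → ℝ → Prop} {ε : ℝ} (hε : 0 < ε) (hP : ∀ x ∈ A, ∃ᶠ r in 𝓝[>] (0 : ℝ), P x r) :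
    ∃ u : Set (X × ℝ), u.Countable ∧ u.PairwiseDisjoint (fun p => closedBall p.1 p.2) ∧
      (∀ p ∈ u, p.1 ∈ A ∧ p.2 ∈ Set.Ioc 0 ε ∧ P p.1 p.2) ∧
      A ⊆ ⋃ p ∈ u, closedBall p.1 (4 * p.2) := by
  obtain ⟨u, hut, hdisj, hcover⟩ :=
    Vitali.exists_disjoint_subfamily_covering_enlargement_closedBall
      {p : X × ℝ | p.1 ∈ A ∧ p.2 ∈ Set.Ioc 0 ε ∧ P p.1 p.2} Prod.fst Prod.snd ε
      (fun p hp => hp.2.1.2) 4 (by norm_num)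
  refine ⟨u, hdisj.countable_of_nonempty_interior fun p hp => ?_, hdisj, hut, fun x hx => ?_⟩
  · exact (nonempty_ball.2 (hut hp).2.1.1).mono
      (interior_maximal ball_subset_closedBall isOpen_ball)
  · obtain ⟨r, hPr, hr⟩ := ((hP x hx).and_eventually (Ioc_mem_nhdsGT hε)).exists
    obtain ⟨q, hq, hsub⟩ := hcover (x, r) ⟨hx, hr, hPr⟩
    exact Set.mem_biUnion hq (hsub (mem_closedBall_self hr.1.le))

variable [MeasurableSpace X]

theorem tsum_ediam_closedBall_rpow_le [OpensMeasurableSpace X] (μ : Measure X)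
    {u : Set (X × ℝ)} (hu : u.Countable) (hdisj : u.PairwiseDisjoint fun p => closedBall p.1 p.2)
    {s T : ℝ} (hs : 0 ≤ s) (hT : 0 < T)
    (hgood : ∀ p ∈ u, 0 ≤ p.2 ∧ ENNReal.ofReal (T * p.2 ^ s) ≤ μ (ball p.1 p.2)) :
    ∑' p : u, ediam (closedBall p.1.1 (4 * p.1.2)) ^ s ≤
      ENNReal.ofReal (8 ^ s / T) * μ (⋃ p ∈ u, ball p.1 p.2) := by
  rw [measure_biUnion hu (hdisj.mono fun _ => ball_subset_closedBall)
    (fun _ _ => measurableSet_ball), ← ENNReal.tsum_mul_left]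
  refine ENNReal.tsum_le_tsum fun ⟨p, hp⟩ => ?_
  obtain ⟨hr, hμ⟩ := hgood p hp
  calc ediam (closedBall p.1 (4 * p.2)) ^ s ≤ ENNReal.ofReal (2 * (4 * p.2)) ^ s := by
        gcongr
        exact ediam_closedBall_le_ofReal _ _
    _ = ENNReal.ofReal (8 ^ s / T) * ENNReal.ofReal (T * p.2 ^ s) := by
        rw [ofReal_rpow_of_nonneg (by positivity) hs, ← ofReal_mul (by positivity),
          ← mul_assoc (8 ^ s / T), div_mul_cancel₀ _ hT.ne', ← Real.mul_rpow (by norm_num) hr]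
        ring_nf
    _ ≤ ENNReal.ofReal (8 ^ s / T) * μ (ball p.1 p.2) := by gcongr

variable [BorelSpace X]

theorem hausdorffMeasure_le_ofReal_mul_measure_cthickening [SecondCountableTopology X]
    (μ : Measure X) {A : Set X} {s T δ : ℝ} (hs : 0 ≤ s) (hT : 0 < T) (hδ : 0 < δ)
    (hdens : ∀ x ∈ A, ∃ᶠ r in 𝓝[>] (0 : ℝ), ENNReal.ofReal (T * r ^ s) ≤ μ (ball x r)) :
    μH[s] A ≤ ENNReal.ofReal (8 ^ s / T) * μ (cthickening δ A) := by
  obtain ⟨ε, -, hε, hε0⟩ := exists_seq_strictAnti_tendsto' hδ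
  choose u hu hdisj hgood hcover using fun k =>
    exists_countable_pairwiseDisjoint_closedBall_cover (hε k).1 hdens
  have := fun k => (hu k).to_subtype
  have hdiam_lim : Tendsto (fun k => ENNReal.ofReal (2 * (4 * ε k))) atTop (𝓝 0) := by
    simpa using ENNReal.tendsto_ofReal ((hε0.const_mul 4).const_mul 2)
  have hcover_iUnion : ∀ k, A ⊆ ⋃ p : u k, closedBall p.1.1 (4 * p.1.2) := fun k =>
    (hcover k).trans (Set.iUnion₂_subset fun p hp => Set.subset_iUnion_of_subset ⟨p, hp⟩ le_rfl)
  have hball_sub : ∀ k, ⋃ p ∈ u k, ball p.1 p.2 ⊆ cthickening δ A := fun k =>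
    Set.iUnion₂_subset fun p hp => ball_subset_closedBall.trans <|
      (closedBall_subset_closedBall ((hgood k p hp).2.1.2.trans (hε k).2.le)).trans
        (closedBall_subset_cthickening (hgood k p hp).1 δ)
  refine (Measure.hausdorffMeasure_le_liminf_tsum s A _ hdiam_lim _
    (Eventually.of_forall fun k p => (ediam_closedBall_le_ofReal _ _).trans
      (ofReal_le_ofReal (by gcongr; exact (hgood k p.1 p.2).2.1.2)))
    (Eventually.of_forall hcover_iUnion)).trans (liminf_le_of_frequently_le' (Frequently.of_forall
      fun k => ?_))
  calc ∑' p : u k, ediam (closedBall p.1.1 (4 * p.1.2)) ^ s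
      ≤ ENNReal.ofReal (8 ^ s / T) * μ (⋃ p ∈ u k, ball p.1 p.2) :=
        tsum_ediam_closedBall_rpow_le μ (hu k) (hdisj k) hs hT fun p hp =>
          ⟨(hgood k p hp).2.1.1.le, (hgood k p hp).2.2⟩
    _ ≤ ENNReal.ofReal (8 ^ s / T) * μ (cthickening δ A) := by gcongr; exact hball_sub k

theorem hausdorffMeasure_eq_zero_of_frequently_le_measure_ball [ProperSpace X] (μ : Measure X)
    [IsFiniteMeasureOnCompacts μ] {A : Set X} {s : ℝ} (hs : 0 ≤ s)
    (hdens : ∀ T : ℝ, ∀ x ∈ A, ∃ᶠ r in 𝓝[>] (0 : ℝ), ENNReal.ofReal (T * r ^ s) ≤ μ (ball x r)) :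
    μH[s] A = 0 := by
  refine measure_null_of_locally_null A fun x _ =>
    ⟨A ∩ ball x 1, inter_mem_nhdsWithin A (ball_mem_nhds x one_pos), ?_⟩
  set U := cthickening 1 (A ∩ ball x 1)
  have hU : μ U ≠ ∞ :=
    (isBounded_ball.subset Set.inter_subset_right).cthickening.measure_lt_top.ne
  have hbound : ∀ T > 0, μH[s] (A ∩ ball x 1) ≤ ENNReal.ofReal (8 ^ s / T) * μ U :=
    fun T hT => hausdorffMeasure_le_ofReal_mul_measure_cthickening μ hs hT one_pos
      fun y hy => hdens T y hy.1
  have hlim : Tendsto (fun T : ℝ => ENNReal.ofReal (8 ^ s / T) * μ U) atTop (𝓝 0) := by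
    simpa using ENNReal.Tendsto.mul_const
      (ENNReal.tendsto_ofReal (tendsto_const_nhds.div_atTop tendsto_id)) (Or.inr hU)
  exact nonpos_iff_eq_zero.1 (ge_of_tendsto hlim ((eventually_gt_atTop 0).mono hbound))

end MetricSpace

theorem stmt3_general {n : ℕ} (μ : Measure (EuclideanSpace ℝ (Fin n))) [IsFiniteMeasureOnCompacts μ]
    (A : Set (EuclideanSpace ℝ (Fin n))) (d : EuclideanSpace ℝ (Fin n) → ℝ)
    (hpos : ∀ x ∈ A, 0 < upperDensity μ (d x) x) :
    (∀ s : ℝ, (⨆ x ∈ A, ENNReal.ofReal (d x)) < ENNReal.ofReal s →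
        μH[s] A = 0) ∧
      dimH A ≤ ⨆ x ∈ A, ENNReal.ofReal (d x) := by
  have hnull : ∀ s : ℝ, (⨆ x ∈ A, ENNReal.ofReal (d x)) < ENNReal.ofReal s → μH[s] A = 0 := by
    intro s hs
    have hlt : ∀ x ∈ A, d x < s := fun x hx =>
      (ofReal_lt_ofReal_iff'.1 ((le_iSup₂ (f := fun x _ => ENNReal.ofReal (d x)) x hx).trans_lt
        hs)).1
    exact hausdorffMeasure_eq_zero_of_frequently_le_measure_ball μ
      (ofReal_pos.1 (bot_le.trans_lt hs)).le fun T x hx =>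
        frequently_ofReal_mul_rpow_le_measure_ball (hpos x hx) (hlt x hx) T
  refine ⟨hnull, dimH_le fun t ht => ?_⟩
  by_contra! h
  rw [hnull t (by rwa [ofReal_coe_nnreal])] at ht
  exact zero_ne_top ht

/-- if `μ` is a Radon measure on `ℝⁿ`, `A ⊆ ℝⁿ`, and `d : A → [0,∞)` satisfies
`D̄^{d(x)} μ(x) > 0` for every `x ∈ A`, then `ℋ^s(A) = 0` for every real
`s > sup_{x∈A} d(x)`; in particular `dim_H A ≤ sup_{x∈A} d(x)`. -/
theorem stmt3 {n : ℕ} (μ : Measure (EuclideanSpace ℝ (Fin n))) [IsFiniteMeasureOnCompacts μ]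
    (A : Set (EuclideanSpace ℝ (Fin n))) (d : EuclideanSpace ℝ (Fin n) → ℝ)
    (hd0 : ∀ x ∈ A, 0 ≤ d x)
    (hpos : ∀ x ∈ A, 0 < upperDensity μ (d x) x) :
    (∀ s : ℝ, (⨆ x ∈ A, ENNReal.ofReal (d x)) < ENNReal.ofReal s →
        μH[s] A = 0) ∧
      dimH A ≤ ⨆ x ∈ A, ENNReal.ofReal (d x) :=
  stmt3_general μ A d hpos
end

section
/- Let Ω ⊆ ℝⁿ be a nonempty open set satisfying the measure density condition with constant c > 0. Then the topological boundary of Ω has n-dimensional Lebesgue measure zero: ℒⁿ(∂Ω) = 0. -/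
open MeasureTheory Metric Filter Topology ENNReal

/-!
By the Lebesgue density theorem, at almost every point outside `Ω` the density of `Ω` tends
to `0`. At a point `x` of `∂Ω`, however, a point `y ∈ Ω` with `dist x y < r / 2` gives
`B(y, r / 2) ⊆ B̄(x, r)`, so `Ω` fills at least the fraction `c / (2ⁿ ℒⁿ(B(0, 1)))` of every
small ball around `x`. Hence `∂Ω` is contained in a null set.
-/

open Module

def MeasureDensityCondition {X : Type*} [PseudoMetricSpace X] [MeasurableSpace X]
    (μ : Measure X) (d : ℕ) (Ω : Set X) (c : ℝ) : Prop :=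
  ∀ x ∈ Ω, ∀ r : ℝ, 0 < r → r ≤ 1 → ENNReal.ofReal (c * r ^ d) ≤ μ (ball x r ∩ Ω)

theorem measure_null_of_frequently_le_density {X : Type*} [MetricSpace X] [MeasurableSpace X]
    [BorelSpace X] [SecondCountableTopology X] [HasBesicovitchCovering X]
    (μ : Measure X) [IsLocallyFiniteMeasure μ] {s t : Set X} (hs : MeasurableSet s)
    (hts : Disjoint t s) {ε : ℝ≥0∞} (hε : 0 < ε)
    (hdens : ∀ x ∈ t, ∃ᶠ r in 𝓝[>] 0, ε ≤ μ (s ∩ closedBall x r) / μ (closedBall x r)) :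
    μ t = 0 := by
  refine measure_mono_null (fun x hx ↦ ?_)
    (ae_iff.1 (Besicovitch.ae_tendsto_measure_inter_div_of_measurableSet μ hs))
  intro hlim
  rw [Set.indicator_of_notMem (hts.notMem_of_mem_left hx)] at hlim
  exact hdens x hx ((hlim.eventually (gt_mem_nhds hε)).mono fun _ ↦ not_le.2)

namespace MeasureDensityCondition

theorem le_measure_inter_closedBall {X : Type*} [PseudoMetricSpace X] [MeasurableSpace X]
    {μ : Measure X} {d : ℕ} {Ω : Set X} {c : ℝ} (h : MeasureDensityCondition μ d Ω c)
    {x : X} (hx : x ∈ closure Ω) {r : ℝ} (hr : 0 < r) (hr2 : r ≤ 2) :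
    ENNReal.ofReal (c * (r / 2) ^ d) ≤ μ (Ω ∩ closedBall x r) := by
  obtain ⟨y, hyΩ, hxy⟩ := Metric.mem_closure_iff.1 hx (r / 2) (by linarith)
  have hsub : ball y (r / 2) ∩ Ω ⊆ Ω ∩ closedBall x r := fun z ⟨hzy, hzΩ⟩ ↦ by
    refine ⟨hzΩ, mem_closedBall.2 ?_⟩
    linarith [dist_triangle z y x, mem_ball.1 hzy, dist_comm x y]
  exact (h y hyΩ (r / 2) (by linarith) (by linarith)).trans (measure_mono hsub)

variable {E : Type*} [NormedAddCommGroup E] [NormedSpace ℝ E] [FiniteDimensional ℝ E]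
  [MeasurableSpace E] [BorelSpace E] {μ : Measure E} [μ.IsAddHaarMeasure]
  {d : ℕ} {Ω : Set E} {c : ℝ}

theorem le_measure_inter_closedBall_div (h : MeasureDensityCondition μ d Ω c)
    (hd : finrank ℝ E = d) {x : E} (hx : x ∈ closure Ω) {r : ℝ} (hr : 0 < r) (hr2 : r ≤ 2) :
    ENNReal.ofReal (c / 2 ^ d) / μ (ball 0 1) ≤
      μ (Ω ∩ closedBall x r) / μ (closedBall x r) := by
  have hV₀ : μ (ball 0 1) ≠ 0 := (measure_ball_pos μ 0 one_pos).ne'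
  have hV : μ (ball 0 1) ≠ ⊤ := measure_ball_lt_top.ne
  have hball : μ (closedBall x r) = ENNReal.ofReal (r ^ d) * μ (ball 0 1) := by
    rw [Measure.addHaar_closedBall μ x hr.le, hd]
  rw [ENNReal.le_div_iff_mul_le (Or.inl (measure_closedBall_pos μ x hr).ne')
    (Or.inl measure_closedBall_lt_top.ne)]
  calc ENNReal.ofReal (c / 2 ^ d) / μ (ball 0 1) * μ (closedBall x r)
      = ENNReal.ofReal (c / 2 ^ d) * ENNReal.ofReal (r ^ d) := by
        rw [hball, mul_comm (ENNReal.ofReal _), ← mul_assoc, ENNReal.div_mul_cancel hV₀ hV]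
    _ = ENNReal.ofReal (c * (r / 2) ^ d) := by
        rw [← ENNReal.ofReal_mul' (by positivity), div_pow]; ring_nf
    _ ≤ μ (Ω ∩ closedBall x r) := h.le_measure_inter_closedBall hx hr hr2

theorem measure_frontier_eq_zero (h : MeasureDensityCondition μ d Ω c) (hd : finrank ℝ E = d)
    (hΩ : IsOpen Ω) (hc : 0 < c) : μ (frontier Ω) = 0 := by
  refine measure_null_of_frequently_le_density μ hΩ.measurableSet
    (disjoint_frontier_iff_isOpen.2 hΩ) (ε := ENNReal.ofReal (c / 2 ^ d) / μ (ball 0 1))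
    (ENNReal.div_pos (ENNReal.ofReal_pos.2 (by positivity)).ne' measure_ball_lt_top.ne)
    fun x hx ↦ Eventually.frequently ?_
  filter_upwards [Ioo_mem_nhdsGT (zero_lt_two' ℝ)] with r hr
  exact h.le_measure_inter_closedBall_div hd hx.1 hr.1 hr.2.le

end MeasureDensityCondition

theorem stmt12_general {n : ℕ} (Ω : Set (EuclideanSpace ℝ (Fin n)))
    (hopen : IsOpen Ω) (c : ℝ) (hc : 0 < c)
    (hmd : ∀ x ∈ Ω, ∀ r : ℝ, 0 < r → r ≤ 1 →
      ENNReal.ofReal (c * r ^ n) ≤ volume (ball x r ∩ Ω)) :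
    volume (frontier Ω) = 0 :=
  MeasureDensityCondition.measure_frontier_eq_zero hmd finrank_euclideanSpace_fin hopen hc

/-- if a nonempty open `Ω ⊆ ℝⁿ` satisfies the measure density condition
with constant `c > 0`, then its topological boundary is Lebesgue-null: `ℒⁿ(∂Ω) = 0`. -/
theorem stmt12 {n : ℕ} (Ω : Set (EuclideanSpace ℝ (Fin n))) (hne : Ω.Nonempty)
    (hopen : IsOpen Ω) (c : ℝ) (hc : 0 < c)
    (hmd : ∀ x ∈ Ω, ∀ r : ℝ, 0 < r → r ≤ 1 →
      ENNReal.ofReal (c * r ^ n) ≤ volume (ball x r ∩ Ω)) :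
    volume (frontier Ω) = 0 :=
  stmt12_general Ω hopen c hc hmd
end

section
/- Let μ be a non-zero Radon measure on ℝⁿ with support Γ, let d : Γ → [0,∞) be a Borel function with 𝔻̄^{d(x)} μ(x) < ∞ for every x ∈ Γ, and let d₀ ≥ 0 satisfy d₀ < inf_{x∈Γ} d(x). Then D̄^{d₀} μ(x) = 0 for every x ∈ ℝⁿ, and μ(E) = 0 for every Borel set E ⊆ ℝⁿ that is σ-finite with respect to the Hausdorff measure ℋ^{d₀} (in particular for every Borel set E with ℋ^{d₀}(E) = 0). -/
/-! At a point of the support, finiteness of the locally uniform `d(x)`-density gives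
`μ (B(x,r)) ≤ C r^{d(x)}` for small `r`, so the `d₀`-density vanishes because `d₀ < d(x)`; off the
support, small balls are null. Where the upper `s`-density is below `c`, a set of small diameter
meeting the set lies in a ball of radius just above its diameter, so every fine cover gives
`μ A ≤ c ℋ^s(A)`; letting `c → 0` shows that `μ` vanishes on sets of finite `ℋ^s` measure. -/

open MeasureTheory Metric Filter Topology ENNReal

open scoped NNReal

section Covering

variable {X : Type*} [MetricSpace X] [MeasurableSpace X] {μ : Measure X} {s : ℝ} {c : ℝ≥0∞}

lemma measure_le_mul_ediam_rpow_of_forall_ball_le (hs : 0 ≤ s) (hc : c ≠ ∞) {t : Set X} {x : X}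
    (hx : x ∈ t) {R : ℝ} (ht : ediam t < ENNReal.ofReal R)
    (hball : ∀ r, 0 < r → r < R → μ (ball x r) ≤ c * ENNReal.ofReal (r ^ s)) :
    μ t ≤ c * ediam t ^ s := by
  set D := (ediam t).toReal
  have hdiam : ediam t = ENNReal.ofReal D := (ofReal_toReal (ht.trans ofReal_lt_top).ne).symm
  have hDR : D < R := by rwa [hdiam, ENNReal.ofReal_lt_ofReal_iff_of_nonneg toReal_nonneg] at ht
  have hbound : ∀ᶠ r in 𝓝[>] D, μ t ≤ c * ENNReal.ofReal (r ^ s) := by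
    filter_upwards [Ioo_mem_nhdsGT hDR] with r hr
    have hsub : t ⊆ ball x r := fun y hy => by
      rw [mem_ball, dist_edist]
      exact (toReal_mono (ht.trans ofReal_lt_top).ne (edist_le_ediam_of_mem hy hx)).trans_lt hr.1
    exact (measure_mono hsub).trans (hball r (toReal_nonneg.trans_lt hr.1) hr.2)
  have hlim : Tendsto (fun r : ℝ => c * ENNReal.ofReal (r ^ s)) (𝓝[>] D)
      (𝓝 (c * ENNReal.ofReal (D ^ s))) :=
    ENNReal.Tendsto.const_mul ((ENNReal.continuous_ofReal.tendsto _).comp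
      (Real.continuousAt_rpow_const D s (Or.inr hs)).continuousWithinAt.tendsto) (Or.inr hc)
  rw [hdiam, ofReal_rpow_of_nonneg toReal_nonneg hs]
  exact ge_of_tendsto hlim hbound

variable [BorelSpace X]

lemma measure_le_mul_hausdorffMeasure_of_forall_ball_le (hs : 0 ≤ s) (hc₀ : c ≠ 0) (hc : c ≠ ∞)
    {A : Set X} {R : ℝ} (hR : 0 < R)
    (hball : ∀ x ∈ A, ∀ r, 0 < r → r < R → μ (ball x r) ≤ c * ENNReal.ofReal (r ^ s)) :
    μ A ≤ c * μH[s] A := by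
  have hR2 : (0 : ℝ≥0∞) < ENNReal.ofReal (R / 2) := ofReal_pos.2 (half_pos hR)
  have hcover : ∀ t : ℕ → Set X, A ⊆ ⋃ m, t m → (∀ m, ediam (t m) ≤ ENNReal.ofReal (R / 2)) →
      μ A ≤ c * ∑' m, ⨆ _ : (t m).Nonempty, ediam (t m) ^ s := by
    intro t hA ht
    calc μ A ≤ ∑' m, μ (t m ∩ A) := by
          refine (measure_mono fun x hx => ?_).trans (measure_iUnion_le _)
          obtain ⟨m, hm⟩ := Set.mem_iUnion.1 (hA hx)
          exact Set.mem_iUnion.2 ⟨m, hm, hx⟩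
      _ ≤ ∑' m, c * ⨆ _ : (t m).Nonempty, ediam (t m) ^ s := by
          refine ENNReal.tsum_le_tsum fun m => ?_
          rcases Set.eq_empty_or_nonempty (t m ∩ A) with he | ⟨x, hxt, hxA⟩
          · simp [he]
          rw [iSup_pos ⟨x, hxt⟩]
          refine (measure_mono Set.inter_subset_left).trans
            (measure_le_mul_ediam_rpow_of_forall_ball_le hs hc hxt ?_ (hball x hxA))
          exact (ht m).trans_lt ((ofReal_lt_ofReal_iff hR).2 (half_lt_self hR))
      _ = c * ∑' m, ⨆ _ : (t m).Nonempty, ediam (t m) ^ s := ENNReal.tsum_mul_left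
  calc μ A ≤ c * ⨅ (t : ℕ → Set X) (_ : A ⊆ ⋃ m, t m)
        (_ : ∀ m, ediam (t m) ≤ ENNReal.ofReal (R / 2)),
        ∑' m, ⨆ _ : (t m).Nonempty, ediam (t m) ^ s := by
        simp only [ENNReal.mul_iInf_of_ne hc₀ hc]
        exact le_iInf fun t => le_iInf₂ (hcover t)
    _ ≤ c * μH[s] A := by
        rw [Measure.hausdorffMeasure_apply]
        gcongr
        exact le_iSup₂ (f := fun (r : ℝ≥0∞) (_ : 0 < r) => ⨅ (t : ℕ → Set X) (_ : A ⊆ ⋃ m, t m)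
          (_ : ∀ m, ediam (t m) ≤ r), ∑' m, ⨆ _ : (t m).Nonempty, ediam (t m) ^ s) _ hR2

lemma measure_le_mul_hausdorffMeasure_of_eventually_ball_le (hs : 0 ≤ s) (hc₀ : c ≠ 0)
    (hc : c ≠ ∞) {A : Set X}
    (hball : ∀ x ∈ A, ∀ᶠ r in 𝓝[>] 0, μ (ball x r) ≤ c * ENNReal.ofReal (r ^ s)) :
    μ A ≤ c * μH[s] A := by
  set A' : ℕ → Set X := fun k =>
    {x ∈ A | ∀ r, 0 < r → r < 1 / ((k : ℝ) + 1) → μ (ball x r) ≤ c * ENNReal.ofReal (r ^ s)}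
  have hmono : Monotone A' := fun k l hkl x hx =>
    ⟨hx.1, fun r hr hrl => hx.2 r hr (hrl.trans_le (Nat.one_div_le_one_div hkl))⟩
  have hunion : ⋃ k, A' k = A := by
    refine Set.Subset.antisymm (Set.iUnion_subset fun k x hx => hx.1) fun x hx => ?_
    obtain ⟨u, hu, hsub⟩ := (mem_nhdsGT_iff_exists_Ioo_subset' one_pos).1 (hball x hx)
    obtain ⟨k, hk⟩ := exists_nat_one_div_lt (Set.mem_Ioi.1 hu)
    exact Set.mem_iUnion.2 ⟨k, hx, fun r hr hrk => hsub ⟨hr, hrk.trans hk⟩⟩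
  rw [← hunion, hmono.measure_iUnion]
  refine iSup_le fun k => ?_
  calc μ (A' k) ≤ c * μH[s] (A' k) :=
        measure_le_mul_hausdorffMeasure_of_forall_ball_le hs hc₀ hc Nat.one_div_pos_of_nat
          fun x hx => hx.2
    _ ≤ c * μH[s] (⋃ k, A' k) := by gcongr; exact Set.subset_iUnion A' k

end Covering

-- In `ℝ`, `⨅` of a family that is not bounded below is `0`.
lemma Real.lt_of_lt_iInf_of_nonneg {ι : Type*} {f : ι → ℝ} {a : ℝ} (ha : 0 ≤ a)
    (h : a < ⨅ i, f i) (i : ι) : a < f i := by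
  by_cases hf : BddBelow (Set.range f)
  · exact h.trans_le (ciInf_le hf i)
  · rw [Real.iInf_of_not_bddBelow hf] at h
    exact absurd ha h.not_ge

section Density

variable {n : ℕ} {μ : Measure (EuclideanSpace ℝ (Fin n))} {s t : ℝ} {x : EuclideanSpace ℝ (Fin n)}

lemma upperDensity_eq_zero_of_eventually_measure_ball_le {C : ℝ≥0∞} (hC : C ≠ ∞) (hst : s < t)
    (hball : ∀ᶠ r in 𝓝[>] 0, μ (ball x r) ≤ C * ENNReal.ofReal (r ^ t)) :
    upperDensity μ s x = 0 := by
  have hbound : ∀ᶠ r in 𝓝[>] (0 : ℝ),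
      μ (ball x r) / ENNReal.ofReal (r ^ s) ≤ C * ENNReal.ofReal (r ^ (t - s)) := by
    filter_upwards [hball, self_mem_nhdsWithin] with r hr (hr0 : 0 < r)
    rw [ENNReal.div_le_iff (ofReal_pos.2 (Real.rpow_pos_of_pos hr0 s)).ne' ofReal_ne_top,
      mul_assoc, ← ofReal_mul (Real.rpow_nonneg hr0.le _), ← Real.rpow_add hr0, sub_add_cancel]
    exact hr
  have hlim : Tendsto (fun r : ℝ => C * ENNReal.ofReal (r ^ (t - s))) (𝓝[>] 0) (𝓝 0) := by
    have hpow : Tendsto (fun r : ℝ => r ^ (t - s)) (𝓝[>] 0) (𝓝 0) := by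
      simpa [Real.zero_rpow (sub_pos.2 hst).ne'] using
        (Real.continuousAt_rpow_const 0 (t - s) (Or.inr (sub_pos.2 hst).le)).continuousWithinAt
          (s := Set.Ioi 0) |>.tendsto
    simpa using ENNReal.Tendsto.const_mul (ENNReal.tendsto_ofReal hpow) (Or.inr hC)
  refine le_antisymm ?_ bot_le
  calc upperDensity μ s x ≤ limsup (fun r : ℝ => C * ENNReal.ofReal (r ^ (t - s))) (𝓝[>] 0) :=
        limsup_le_limsup hbound
    _ = 0 := hlim.limsup_eq

lemma upperDensity_eq_zero_of_notMem_msupport (hx : x ∉ msupport μ) : upperDensity μ s x = 0 := by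
  simp only [msupport, Set.mem_ofPred_eq, not_forall, not_lt, nonpos_iff_eq_zero] at hx
  obtain ⟨R, hR, hμR⟩ := hx
  refine upperDensity_eq_zero_of_eventually_measure_ball_le zero_ne_top (lt_add_one s) ?_
  filter_upwards [Ioo_mem_nhdsGT hR] with r hr
  rw [measure_mono_null (ball_subset_ball hr.2.le) hμR]
  exact zero_le

lemma eventually_measure_ball_le_of_unifUpperDensity_ne_top (h : unifUpperDensity μ t x ≠ ∞) :
    ∃ C ≠ ∞, ∀ᶠ r in 𝓝[>] 0, μ (ball x r) ≤ C * ENNReal.ofReal (r ^ t) := by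
  obtain ⟨R, hR, hC⟩ : ∃ R, 0 < R ∧ (⨆ (y) (_ : y ∈ ball x R) (r : ℝ) (_ : 0 < r) (_ : r ≤ R),
      μ (ball y r) / ENNReal.ofReal (r ^ t)) ≠ ∞ := by
    simpa [unifUpperDensity] using h
  refine ⟨_, hC, ?_⟩
  filter_upwards [Ioc_mem_nhdsGT hR] with r hr
  rw [← ENNReal.div_le_iff (ofReal_pos.2 (Real.rpow_pos_of_pos hr.1 t)).ne' ofReal_ne_top]
  exact le_iSup₂_of_le x (mem_ball_self hR) (le_iSup₂_of_le r hr.1 (le_iSup_of_le hr.2 le_rfl))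

lemma upperDensity_eq_zero_of_unifUpperDensity_ne_top (hst : s < t)
    (h : unifUpperDensity μ t x ≠ ∞) : upperDensity μ s x = 0 :=
  have ⟨_, hC, hball⟩ := eventually_measure_ball_le_of_unifUpperDensity_ne_top h
  upperDensity_eq_zero_of_eventually_measure_ball_le hC hst hball

lemma eventually_measure_ball_le_of_upperDensity_lt {c : ℝ≥0∞} (h : upperDensity μ s x < c) :
    ∀ᶠ r in 𝓝[>] 0, μ (ball x r) ≤ c * ENNReal.ofReal (r ^ s) := by
  filter_upwards [eventually_lt_of_limsup_lt h, self_mem_nhdsWithin] with r hr (hr0 : 0 < r)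
  rw [← ENNReal.div_le_iff (ofReal_pos.2 (Real.rpow_pos_of_pos hr0 s)).ne' ofReal_ne_top]
  exact hr.le

lemma measure_eq_zero_of_upperDensity_eq_zero (hs : 0 ≤ s) {A : Set (EuclideanSpace ℝ (Fin n))}
    (hA : μH[s] A ≠ ∞) (h : ∀ x ∈ A, upperDensity μ s x = 0) : μ A = 0 := by
  have hle : ∀ c : ℝ≥0, 0 < c → μ A ≤ c * μH[s] A := fun c hc =>
    measure_le_mul_hausdorffMeasure_of_eventually_ball_le hs (by exact_mod_cast hc.ne')
      coe_ne_top fun x hx => eventually_measure_ball_le_of_upperDensity_lt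
        ((h x hx).trans_lt (by exact_mod_cast hc))
  have hlim : Tendsto (fun c : ℝ≥0 => (c : ℝ≥0∞) * μH[s] A) (𝓝[>] 0) (𝓝 0) := by
    simpa using ENNReal.Tendsto.mul_const (ENNReal.tendsto_coe.2
      (tendsto_nhdsWithin_of_tendsto_nhds (tendsto_id (x := 𝓝 (0 : ℝ≥0))))) (Or.inr hA)
  exact le_antisymm (ge_of_tendsto hlim (eventually_nhdsWithin_of_forall hle)) bot_le

end Density

theorem stmt13_general {n : ℕ} (μ : Measure (EuclideanSpace ℝ (Fin n)))
    (d : EuclideanSpace ℝ (Fin n) → ℝ)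
    (hfin : ∀ x ∈ msupport μ, unifUpperDensity μ (d x) x ≠ ⊤)
    (d₀ : ℝ) (hd₀0 : 0 ≤ d₀) (hd₀ : d₀ < ⨅ x : msupport μ, d x) :
    (∀ x : EuclideanSpace ℝ (Fin n), upperDensity μ d₀ x = 0) ∧
    (∀ E : Set (EuclideanSpace ℝ (Fin n)), MeasurableSet E →
      (∃ f : ℕ → Set (EuclideanSpace ℝ (Fin n)),
        E ⊆ ⋃ i, f i ∧ ∀ i, μH[d₀] (f i) ≠ ⊤) → μ E = 0) ∧
    (∀ E : Set (EuclideanSpace ℝ (Fin n)), MeasurableSet E →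
      μH[d₀] E = 0 → μ E = 0) := by
  have hdens (x) : upperDensity μ d₀ x = 0 := by
    by_cases hx : x ∈ msupport μ
    · exact upperDensity_eq_zero_of_unifUpperDensity_ne_top
        (Real.lt_of_lt_iInf_of_nonneg hd₀0 hd₀ ⟨x, hx⟩) (hfin x hx)
    · exact upperDensity_eq_zero_of_notMem_msupport hx
  have hnull {A} (hA : μH[d₀] A ≠ ⊤) : μ A = 0 :=
    measure_eq_zero_of_upperDensity_eq_zero hd₀0 hA fun x _ => hdens x
  refine ⟨hdens, fun E _ ⟨f, hEf, hf⟩ => ?_, fun E _ hE => hnull (hE ▸ zero_ne_top)⟩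
  exact measure_mono_null hEf (measure_iUnion_null fun i => hnull (hf i))

/-- if `d : Γ → [0,∞)` is Borel with everywhere finite locally uniform
upper densities and `0 ≤ d₀ < inf_{x∈Γ} d(x)`, then `D̄^{d₀} μ(x) = 0` for every
`x ∈ ℝⁿ`, and `μ` vanishes on every Borel set that is σ-finite for `ℋ^{d₀}` (in
particular on every Borel `ℋ^{d₀}`-null set). -/
theorem stmt13 {n : ℕ} (μ : Measure (EuclideanSpace ℝ (Fin n))) [IsFiniteMeasureOnCompacts μ]
    (hμ : μ ≠ 0) (d : EuclideanSpace ℝ (Fin n) → ℝ)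
    (hd0 : ∀ x ∈ msupport μ, 0 ≤ d x)
    (hdBorel : Measurable ((msupport μ).restrict d))
    (hfin : ∀ x ∈ msupport μ, unifUpperDensity μ (d x) x ≠ ⊤)
    (d₀ : ℝ) (hd₀0 : 0 ≤ d₀) (hd₀ : d₀ < ⨅ x : msupport μ, d x) :
    (∀ x : EuclideanSpace ℝ (Fin n), upperDensity μ d₀ x = 0) ∧
    (∀ E : Set (EuclideanSpace ℝ (Fin n)), MeasurableSet E →
      (∃ f : ℕ → Set (EuclideanSpace ℝ (Fin n)),
        E ⊆ ⋃ i, f i ∧ ∀ i, μH[d₀] (f i) ≠ ⊤) → μ E = 0) ∧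
    (∀ E : Set (EuclideanSpace ℝ (Fin n)), MeasurableSet E →
      μH[d₀] E = 0 → μ E = 0) :=
  stmt13_general μ d hfin d₀ hd₀0 hd₀
end

section
/- For κ > 0 let h_κ(r) := (−log r)^{−κ} for 0 < r < 1 and h_κ(0) := 0. Let μ be a non-zero Radon measure on ℝⁿ with support Γ, let κ : Γ → (0,∞) be a Borel function with 𝔻̄^{h_{κ(x)}} μ(x) < ∞ for every x ∈ Γ, and let κ₀ > 0 satisfy κ₀ < inf_{x∈Γ} κ(x). Then D̄^{h_{κ₀}} μ(x) = 0 for every x ∈ ℝⁿ, and μ(E) = 0 for every Borel set E ⊆ ℝⁿ that is σ-finite with respect to the Hausdorff measure ℋ^{h_{κ₀}} constructed from the gauge h_{κ₀}. -/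
open MeasureTheory Metric Filter Topology ENNReal

/-- The logarithmic gauge `h_κ(r) = (−log r)^{−κ}` (for `0 < r < 1`; `h_κ(0) = 0`,
since `0 ^ (−κ) = 0` for `κ > 0`). -/
noncomputable def logGauge (κ : ℝ) (r : ℝ) : ℝ := (-Real.log r) ^ (-κ)

/-- The upper `h`-density of a measure `μ` at `x` for a gauge `h`. -/
noncomputable def upperDensityG {n : ℕ} (μ : Measure (EuclideanSpace ℝ (Fin n)))
    (h : ℝ → ℝ) (x : EuclideanSpace ℝ (Fin n)) : ℝ≥0∞ :=
  Filter.limsup (fun r : ℝ => μ (ball x r) / ENNReal.ofReal (h r)) (𝓝[>] (0 : ℝ))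

/-- The locally uniform upper `h`-density of `μ` at `x` for a gauge `h`. -/
noncomputable def unifUpperDensityG {n : ℕ} (μ : Measure (EuclideanSpace ℝ (Fin n)))
    (h : ℝ → ℝ) (x : EuclideanSpace ℝ (Fin n)) : ℝ≥0∞ :=
  ⨅ (r : ℝ) (_ : 0 < r),
    ⨆ (y : EuclideanSpace ℝ (Fin n)) (_ : y ∈ ball x r) (ϱ : ℝ) (_ : 0 < ϱ) (_ : ϱ ≤ r),
      μ (ball y ϱ) / ENNReal.ofReal (h ϱ)

/-- The Hausdorff (metric outer) measure on `ℝⁿ` constructed from a gauge `h`. -/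
noncomputable def hausdorffGauge {n : ℕ} (h : ℝ → ℝ) :
    Measure (EuclideanSpace ℝ (Fin n)) :=
  Measure.mkMetric (fun t : ℝ≥0∞ => ENNReal.ofReal (h t.toReal))

/-!
At a point `x` of the support, finiteness of the `h_{κ(x)}`-density gives
`μ(B(x,r)) ≲ h_{κ(x)}(r) = h_{κ₀}(r) · h_{κ(x)-κ₀}(r)` with `h_{κ(x)-κ₀}(r) → 0`, so the
`h_{κ₀}`-density of `μ` vanishes everywhere. Since `h_{κ₀}` is doubling near `0`, if this density
is below `ε` on a set `A`, every set `s` of small diameter meeting `A` at `x` satisfies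
`μ(s ∩ A) ≤ μ(B(x, 2 diam s)) ≲ 2^{κ₀} ε h_{κ₀}(diam s)`; summing over covers gives
`μ(A) ≤ 2^{κ₀} ε ℋ^{h_{κ₀}}(A)`, and letting `ε → 0` kills every set of finite `ℋ^{h_{κ₀}}`-measure.
-/

open Set

lemma logGauge_pos {κ r : ℝ} (hr0 : 0 < r) (hr1 : r < 1) : 0 < logGauge κ r :=
  Real.rpow_pos_of_pos (neg_pos.2 (Real.log_neg hr0 hr1)) _

lemma logGauge_zero {κ : ℝ} (hκ : κ ≠ 0) : logGauge κ 0 = 0 := by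
  simp [logGauge, Real.zero_rpow (neg_ne_zero.2 hκ)]

lemma tendsto_logGauge_nhdsGT_zero {κ : ℝ} (hκ : 0 < κ) :
    Tendsto (logGauge κ) (𝓝[>] 0) (𝓝 0) :=
  (tendsto_rpow_neg_atTop hκ).comp (tendsto_neg_atBot_atTop.comp Real.tendsto_log_nhdsGT_zero)

lemma logGauge_sub {κ κ₀ r : ℝ} (hr0 : 0 < r) (hr1 : r < 1) :
    logGauge (κ - κ₀) r = logGauge κ r / logGauge κ₀ r := by
  rw [logGauge, neg_sub', Real.rpow_sub (neg_pos.2 (Real.log_neg hr0 hr1))]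
  rfl

-- For `d ≤ 1/4` we have `-log (2d) ≥ -log d / 2`, whence the doubling constant `2 ^ κ`.
lemma logGauge_two_mul_le {κ d : ℝ} (hκ : 0 ≤ κ) (hd0 : 0 < d) (hd : d ≤ 1 / 4) :
    logGauge κ (2 * d) ≤ 2 ^ κ * logGauge κ d := by
  have hlog2 : 0 < Real.log 2 := Real.log_pos one_lt_two
  have hlog_d : Real.log d ≤ -(2 * Real.log 2) := by
    have h4 : Real.log (1 / 4 : ℝ) = -(2 * Real.log 2) := by
      rw [one_div, Real.log_inv, show (4 : ℝ) = 2 ^ 2 by norm_num, Real.log_pow]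
      push_cast; ring
    linarith [Real.log_le_log hd0 hd]
  have hlog_2d : Real.log (2 * d) = Real.log 2 + Real.log d := Real.log_mul two_ne_zero hd0.ne'
  have hL : 0 < -Real.log d := by linarith
  have hhalf : -Real.log d / 2 ≤ -Real.log (2 * d) := by rw [hlog_2d]; linarith
  calc logGauge κ (2 * d) = ((-Real.log (2 * d)) ^ κ)⁻¹ :=
        Real.rpow_neg (by linarith) κ
    _ ≤ ((-Real.log d / 2) ^ κ)⁻¹ :=
        inv_anti₀ (by positivity) (Real.rpow_le_rpow (by positivity) hhalf hκ)
    _ = 2 ^ κ * logGauge κ d := by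
        rw [Real.div_rpow hL.le zero_le_two, logGauge, Real.rpow_neg hL.le, inv_div, div_eq_mul_inv]

section Density

variable {n : ℕ} {μ : Measure (EuclideanSpace ℝ (Fin n))} {x : EuclideanSpace ℝ (Fin n)}

lemma upperDensityG_le_unifUpperDensityG (h : ℝ → ℝ) :
    upperDensityG μ h x ≤ unifUpperDensityG μ h x := by
  refine le_iInf₂ fun r hr => limsup_le_of_le ?_ ?_
  · isBoundedDefault
  filter_upwards [Ioc_mem_nhdsGT hr] with ϱ hϱ
  exact le_iSup₂_of_le x (mem_ball_self hr) (le_iSup₂_of_le ϱ hϱ.1 (le_iSup_of_le hϱ.2 le_rfl))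

lemma upperDensityG_eq_zero_of_notMem_msupport (h : ℝ → ℝ) (hx : x ∉ msupport μ) :
    upperDensityG μ h x = 0 := by
  simp only [msupport, mem_ofPred_eq, not_forall, not_lt, nonpos_iff_eq_zero] at hx
  obtain ⟨r, hr, hμr⟩ := hx
  have hzero : (fun ϱ => μ (ball x ϱ) / ENNReal.ofReal (h ϱ)) =ᶠ[𝓝[>] 0] fun _ => 0 := by
    filter_upwards [Ioc_mem_nhdsGT hr] with ϱ hϱ
    rw [measure_mono_null (ball_subset_ball hϱ.2) hμr, ENNReal.zero_div]
  rw [upperDensityG, limsup_congr hzero, limsup_const]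

lemma eventually_measure_ball_le_of_upperDensityG_lt {h : ℝ → ℝ} {ε : ℝ≥0∞} (hε : ε ≠ ⊤)
    (hx : upperDensityG μ h x < ε) :
    ∀ᶠ r in 𝓝[>] 0, μ (ball x r) ≤ ε * ENNReal.ofReal (h r) := by
  filter_upwards [eventually_lt_of_limsup_lt hx] with r hr
  exact (ENNReal.div_le_iff_le_mul (Or.inr hε) (Or.inl ENNReal.ofReal_ne_top)).1 hr.le

lemma upperDensityG_logGauge_eq_zero_of_lt {κ κ₀ : ℝ} (hκ : κ₀ < κ)
    (hfin : upperDensityG μ (logGauge κ) x ≠ ⊤) : upperDensityG μ (logGauge κ₀) x = 0 := by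
  set M := upperDensityG μ (logGauge κ) x + 1
  have hM : M ≠ ⊤ := ENNReal.add_ne_top.2 ⟨hfin, ENNReal.one_ne_top⟩
  have hbound : ∀ᶠ r in 𝓝[>] 0, μ (ball x r) / ENNReal.ofReal (logGauge κ₀ r) ≤
      M * ENNReal.ofReal (logGauge (κ - κ₀) r) := by
    filter_upwards [eventually_measure_ball_le_of_upperDensityG_lt hM
      (ENNReal.lt_add_right hfin one_ne_zero), Ioo_mem_nhdsGT one_pos] with r hμr hr
    calc μ (ball x r) / ENNReal.ofReal (logGauge κ₀ r)
        ≤ M * ENNReal.ofReal (logGauge κ r) / ENNReal.ofReal (logGauge κ₀ r) :=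
          ENNReal.div_le_div_right hμr _
      _ = M * ENNReal.ofReal (logGauge (κ - κ₀) r) := by
          rw [mul_div_assoc, ← ENNReal.ofReal_div_of_pos (logGauge_pos hr.1 hr.2),
            logGauge_sub hr.1 hr.2]
  have hlim : Tendsto (fun r => M * ENNReal.ofReal (logGauge (κ - κ₀) r)) (𝓝[>] 0) (𝓝 0) := by
    simpa using ENNReal.Tendsto.const_mul
      (ENNReal.tendsto_ofReal (tendsto_logGauge_nhdsGT_zero (sub_pos.2 hκ))) (Or.inr hM)
  exact (tendsto_of_tendsto_of_tendsto_of_le_of_le' tendsto_const_nhds hlim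
    (.of_forall fun _ => zero_le) hbound).limsup_eq

end Density

structure IsDoublingGauge (h : ℝ → ℝ) (C d₀ : ℝ) : Prop where
  const_pos : 0 < C
  scale_pos : 0 < d₀
  map_zero : h 0 = 0
  tendsto_nhdsGT_zero : Tendsto h (𝓝[>] 0) (𝓝 0)
  two_mul_le : ∀ d ∈ Ioc 0 d₀, h (2 * d) ≤ C * h d

lemma isDoublingGauge_logGauge {κ : ℝ} (hκ : 0 < κ) :
    IsDoublingGauge (logGauge κ) (2 ^ κ) (1 / 4) where
  const_pos := by positivity
  scale_pos := by norm_num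
  map_zero := logGauge_zero hκ.ne'
  tendsto_nhdsGT_zero := tendsto_logGauge_nhdsGT_zero hκ
  two_mul_le _ hd := logGauge_two_mul_le hκ.le hd.1 hd.2

section Covering

variable {n : ℕ} {μ : Measure (EuclideanSpace ℝ (Fin n))} {h : ℝ → ℝ} {C d₀ δ : ℝ}
  {ε : ℝ≥0∞} {S A : Set (EuclideanSpace ℝ (Fin n))}

lemma measure_inter_le_of_forall_ball_le (hh : IsDoublingGauge h C d₀) (hδ : 0 < δ) (hε : ε ≠ ⊤)
    (hS : ∀ x ∈ S, ∀ r ∈ Ioc 0 δ, μ (ball x r) ≤ ε * ENNReal.ofReal (h r))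
    {s : Set (EuclideanSpace ℝ (Fin n))} (hs : ediam s ≤ ENNReal.ofReal (min (δ / 2) d₀)) :
    μ (s ∩ S) ≤ ENNReal.ofReal C * ε * ENNReal.ofReal (h (ediam s).toReal) := by
  obtain hempty | ⟨x, hxs, hxS⟩ := (s ∩ S).eq_empty_or_nonempty
  · simp [hempty]
  have hs_top : ediam s ≠ ⊤ := ne_top_of_le_ne_top ENNReal.ofReal_ne_top hs
  have hdiam : diam s ≤ min (δ / 2) d₀ :=
    ENNReal.toReal_le_of_le_ofReal (le_min (by positivity) hh.scale_pos.le) hs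
  have hsub : ∀ r, diam s < r → s ∩ S ⊆ ball x r := fun r hr y hy =>
    (dist_le_diam_of_mem' hs_top hy.1 hxs).trans_lt hr
  change μ (s ∩ S) ≤ ENNReal.ofReal C * ε * ENNReal.ofReal (h (diam s))
  obtain hd | hd := (diam_nonneg (s := s)).eq_or_lt
  · have hlim : Tendsto (fun r => ε * ENNReal.ofReal (h r)) (𝓝[>] 0) (𝓝 0) := by
      simpa using
        ENNReal.Tendsto.const_mul (ENNReal.tendsto_ofReal hh.tendsto_nhdsGT_zero) (Or.inr hε)
    have hle : ∀ᶠ r in 𝓝[>] 0, μ (s ∩ S) ≤ ε * ENNReal.ofReal (h r) := by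
      filter_upwards [Ioc_mem_nhdsGT hδ] with r hr
      exact (measure_mono (hsub r (hd ▸ hr.1))).trans (hS x hxS r hr)
    rw [← hd, hh.map_zero, nonpos_iff_eq_zero.1 (ge_of_tendsto hlim hle)]
    exact zero_le
  calc μ (s ∩ S) ≤ ε * ENNReal.ofReal (h (2 * diam s)) :=
        (measure_mono (hsub _ (by linarith))).trans
          (hS x hxS _ ⟨by linarith, by linarith [min_le_left (δ / 2) d₀]⟩)
    _ ≤ ε * ENNReal.ofReal (C * h (diam s)) := by
        gcongr
        exact hh.two_mul_le _ ⟨hd, hdiam.trans (min_le_right _ _)⟩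
    _ = ENNReal.ofReal C * ε * ENNReal.ofReal (h (diam s)) := by
        rw [ENNReal.ofReal_mul hh.const_pos.le]; ring

lemma measure_le_mul_hausdorffGauge (hh : IsDoublingGauge h C d₀) (hδ : 0 < δ)
    (hε0 : ε ≠ 0) (hε : ε ≠ ⊤)
    (hS : ∀ x ∈ S, ∀ r ∈ Ioc 0 δ, μ (ball x r) ≤ ε * ENNReal.ofReal (h r)) :
    μ S ≤ ENNReal.ofReal C * ε * hausdorffGauge h S := by
  set c := ENNReal.ofReal C * ε
  have hc0 : c ≠ 0 := mul_ne_zero (ENNReal.ofReal_pos.2 hh.const_pos).ne' hε0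
  have hc : c ≠ ⊤ := ENNReal.mul_ne_top ENNReal.ofReal_ne_top hε
  -- `S` need not be measurable, so we compare outer measures rather than `μ.restrict S`.
  have hle : OuterMeasure.restrict S μ.toOuterMeasure ≤
      OuterMeasure.mkMetric (c • fun t : ℝ≥0∞ => ENNReal.ofReal (h t.toReal)) :=
    OuterMeasure.le_mkMetric _ _ _ (ENNReal.ofReal_pos.2 (lt_min (half_pos hδ) hh.scale_pos))
      fun s hs => by
        simpa [OuterMeasure.restrict_apply] using measure_inter_le_of_forall_ball_le hh hδ hε hS hs
  rw [OuterMeasure.mkMetric_smul _ hc hc0] at hle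
  simpa [OuterMeasure.restrict_apply, hausdorffGauge, OuterMeasure.coe_mkMetric] using hle S

lemma measure_le_mul_hausdorffGauge_of_upperDensityG_lt (hh : IsDoublingGauge h C d₀) (hε : ε ≠ ⊤)
    (hA : ∀ x ∈ A, upperDensityG μ h x < ε) :
    μ A ≤ ENNReal.ofReal C * ε * hausdorffGauge h A := by
  obtain rfl | ⟨x₀, hx₀⟩ := A.eq_empty_or_nonempty
  · simp
  have hε0 : ε ≠ 0 := (zero_le.trans_lt (hA x₀ hx₀)).ne'
  set S : ℕ → Set (EuclideanSpace ℝ (Fin n)) := fun k =>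
    {x ∈ A | ∀ r ∈ Ioc 0 ((k : ℝ) + 1)⁻¹, μ (ball x r) ≤ ε * ENNReal.ofReal (h r)}
  have hS_mono : Monotone S := fun k l hkl x hx =>
    ⟨hx.1, fun r hr => hx.2 r ⟨hr.1, hr.2.trans (by gcongr)⟩⟩
  have hA_cover : A ⊆ ⋃ k, S k := by
    intro x hx
    obtain ⟨δ, hδ, hδS⟩ := mem_nhdsGT_iff_exists_Ioc_subset.1
      (eventually_measure_ball_le_of_upperDensityG_lt hε (hA x hx))
    obtain ⟨k, hk⟩ := exists_nat_one_div_lt (K := ℝ) hδ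
    exact mem_iUnion.2 ⟨k, hx, fun r hr => hδS ⟨hr.1, hr.2.trans (by simpa using hk.le)⟩⟩
  calc μ A ≤ μ (⋃ k, S k) := measure_mono hA_cover
    _ = ⨆ k, μ (S k) := hS_mono.measure_iUnion
    _ ≤ ENNReal.ofReal C * ε * hausdorffGauge h A := iSup_le fun k =>
        (measure_le_mul_hausdorffGauge hh (by positivity) hε0 hε fun x hx => hx.2).trans
          (by gcongr; exact sep_subset _ _)

lemma measure_eq_zero_of_upperDensityG_eq_zero (hh : IsDoublingGauge h C d₀)
    (hA : hausdorffGauge h A ≠ ⊤) (hdens : ∀ x ∈ A, upperDensityG μ h x = 0) : μ A = 0 := by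
  have hlim : Tendsto (fun ε => ENNReal.ofReal C * ε * hausdorffGauge h A) (𝓝[>] 0) (𝓝 0) := by
    simpa using ENNReal.Tendsto.mul_const (ENNReal.Tendsto.const_mul
      (tendsto_nhdsWithin_of_tendsto_nhds (tendsto_id (x := 𝓝 (0 : ℝ≥0∞))))
        (Or.inr ENNReal.ofReal_ne_top)) (Or.inr hA)
  refine nonpos_iff_eq_zero.1 (ge_of_tendsto hlim ?_)
  filter_upwards [Ioo_mem_nhdsGT zero_lt_one] with ε hε
  exact measure_le_mul_hausdorffGauge_of_upperDensityG_lt hh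
    (hε.2.trans ENNReal.one_lt_top).ne fun x hx => hdens x hx ▸ hε.1

end Covering

theorem stmt14_general {n : ℕ} (μ : Measure (EuclideanSpace ℝ (Fin n)))
    (κ : EuclideanSpace ℝ (Fin n) → ℝ)
    (hκpos : ∀ x ∈ msupport μ, 0 < κ x)
    (hfin : ∀ x ∈ msupport μ, unifUpperDensityG μ (logGauge (κ x)) x ≠ ⊤)
    (κ₀ : ℝ) (hκ₀0 : 0 < κ₀) (hκ₀ : κ₀ < ⨅ x : msupport μ, κ x) :
    (∀ x : EuclideanSpace ℝ (Fin n), upperDensityG μ (logGauge κ₀) x = 0) ∧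
    (∀ E : Set (EuclideanSpace ℝ (Fin n)), MeasurableSet E →
      (∃ f : ℕ → Set (EuclideanSpace ℝ (Fin n)),
        E ⊆ ⋃ i, f i ∧ ∀ i, hausdorffGauge (n := n) (logGauge κ₀) (f i) ≠ ⊤) →
      μ E = 0) := by
  have hdens : ∀ x, upperDensityG μ (logGauge κ₀) x = 0 := by
    intro x
    by_cases hx : x ∈ msupport μ
    · have hκ_bdd : BddBelow (range fun y : msupport μ => κ y) :=
        ⟨0, forall_mem_range.2 fun y => (hκpos y y.2).le⟩
      exact upperDensityG_logGauge_eq_zero_of_lt (hκ₀.trans_le (ciInf_le hκ_bdd ⟨x, hx⟩))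
        ((upperDensityG_le_unifUpperDensityG _).trans_lt (hfin x hx).lt_top).ne
    · exact upperDensityG_eq_zero_of_notMem_msupport _ hx
  refine ⟨hdens, fun E _ ⟨f, hEf, hf⟩ => measure_mono_null hEf (measure_iUnion_null fun i => ?_)⟩
  exact measure_eq_zero_of_upperDensityG_eq_zero (isDoublingGauge_logGauge hκ₀0) (hf i)
    fun x _ => hdens x

/-- if `κ : Γ → (0,∞)` is Borel with everywhere finite locally uniform
upper `h_{κ(x)}`-densities and `0 < κ₀ < inf_{x∈Γ} κ(x)`, then `D̄^{h_{κ₀}} μ(x) = 0`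
for every `x ∈ ℝⁿ`, and `μ` vanishes on every Borel set that is σ-finite for the gauge
Hausdorff measure `ℋ^{h_{κ₀}}`. -/
theorem stmt14 {n : ℕ} (μ : Measure (EuclideanSpace ℝ (Fin n))) [IsFiniteMeasureOnCompacts μ]
    (hμ : μ ≠ 0) (κ : EuclideanSpace ℝ (Fin n) → ℝ)
    (hκpos : ∀ x ∈ msupport μ, 0 < κ x)
    (hκBorel : Measurable ((msupport μ).restrict κ))
    (hfin : ∀ x ∈ msupport μ, unifUpperDensityG μ (logGauge (κ x)) x ≠ ⊤)
    (κ₀ : ℝ) (hκ₀0 : 0 < κ₀) (hκ₀ : κ₀ < ⨅ x : msupport μ, κ x) :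
    (∀ x : EuclideanSpace ℝ (Fin n), upperDensityG μ (logGauge κ₀) x = 0) ∧
    (∀ E : Set (EuclideanSpace ℝ (Fin n)), MeasurableSet E →
      (∃ f : ℕ → Set (EuclideanSpace ℝ (Fin n)),
        E ⊆ ⋃ i, f i ∧ ∀ i, hausdorffGauge (n := n) (logGauge κ₀) (f i) ≠ ⊤) →
      μ E = 0) :=
  stmt14_general μ κ hκpos hfin κ₀ hκ₀0 hκ₀
end
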